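/- arXiv:1607.02684 — 4 statements merged into one kernel-verified Lean document; each statement's English description precedes it below -/
import Mathlib

section
/- The map h₃ : U(1) × SU(3) × SU(3) → S(U(3) × U(3)) given by h₃(θ, A, B) = diag(θA, θ⁻¹B) is a surjective group homomorphism whose kernel is {(1,E,E), (ω, ω²E, ωE), (ω², ωE, ω²E)} where ω is a primitive cube root of unity; hence S(U(3) × U(3)) ≅ (U(1) × SU(3) × SU(3))/Z₃. -/
/-!
Scalars commute with all matrices, so `h₃` is multiplicative, and it lands in `S(U(3) × U(3))`
because `det (θ A) · det (θ⁻¹ B) = θ³ θ⁻³ = 1`. For surjectivity onto `diag(C, D)` take a cube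
root `θ` of `det C` (it has modulus one) and `A = θ⁻¹ C`, `B = θ D`. In the kernel, `θ A = E`
forces `A = θ⁻¹ E`, and then `det A = 1` makes `θ` a cube root of unity, with `θ⁻¹ = θ²`.
-/

open Matrix

/-- `h₃(θ, A, B) = diag(θA, θ⁻¹B)` as a `6×6` complex matrix (blocks indexed by `Fin 3 ⊕ Fin 3`). -/
noncomputable def h₃ (θ : ℂ) (A B : Matrix (Fin 3) (Fin 3) ℂ) :
    Matrix (Fin 3 ⊕ Fin 3) (Fin 3 ⊕ Fin 3) ℂ :=
  fromBlocks (θ • A) 0 0 (θ⁻¹ • B)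

/-- `S(U(3) × U(3))`: block-diagonal matrices `diag(C, D)` with `C, D ∈ U(3)`, inside `SU(6)`. -/
def SU3xU3 : Set (Matrix (Fin 3 ⊕ Fin 3) (Fin 3 ⊕ Fin 3) ℂ) :=
  {M | M ∈ Matrix.specialUnitaryGroup (Fin 3 ⊕ Fin 3) ℂ ∧
    ∃ C D : Matrix (Fin 3) (Fin 3) ℂ, C ∈ Matrix.unitaryGroup (Fin 3) ℂ ∧
      D ∈ Matrix.unitaryGroup (Fin 3) ℂ ∧ M = fromBlocks C 0 0 D}

theorem Complex.mem_unitary_iff_norm_eq_one {z : ℂ} : z ∈ unitary ℂ ↔ ‖z‖ = 1 := by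
  rw [Unitary.mem_iff_star_mul_self, Complex.star_def, Complex.conj_mul']
  norm_cast
  exact pow_eq_one_iff_of_nonneg (norm_nonneg z) two_ne_zero

theorem Matrix.fromBlocks_mem_unitaryGroup {m n α : Type*} [Fintype m] [DecidableEq m]
    [Fintype n] [DecidableEq n] [CommRing α] [StarRing α] {C : Matrix m m α} {D : Matrix n n α}
    (hC : C ∈ unitaryGroup m α) (hD : D ∈ unitaryGroup n α) :
    fromBlocks C 0 0 D ∈ unitaryGroup (m ⊕ n) α := by
  rw [mem_unitaryGroup_iff, star_eq_conjTranspose, fromBlocks_conjTranspose, fromBlocks_multiply]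
  rw [mem_unitaryGroup_iff, star_eq_conjTranspose] at hC hD
  simp [hC, hD, fromBlocks_one]

theorem Matrix.smul_mem_unitaryGroup_of_norm_eq_one {n : Type*} [Fintype n] [DecidableEq n]
    {c : ℂ} (hc : ‖c‖ = 1) {A : Matrix n n ℂ} (hA : A ∈ unitaryGroup n ℂ) :
    c • A ∈ unitaryGroup n ℂ :=
  Unitary.smul_mem_of_mem (Complex.mem_unitary_iff_norm_eq_one.2 hc) hA

theorem IsPrimitiveRoot.pow_three_eq_one_iff {ω θ : ℂ} (hω : IsPrimitiveRoot ω 3) :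
    θ ^ 3 = 1 ↔ θ = 1 ∨ θ = ω ∨ θ = ω ^ 2 := by
  constructor
  · intro hθ
    obtain ⟨i, hi, rfl⟩ := hω.eq_pow_of_pow_eq_one hθ
    interval_cases i <;> simp
  · rintro (rfl | rfl | rfl)
    · exact one_pow 3
    · exact hω.pow_eq_one
    · rw [← pow_mul, mul_comm, pow_mul, hω.pow_eq_one, one_pow]

section h₃

variable {θ : ℂ} {A B : Matrix (Fin 3) (Fin 3) ℂ}

theorem h₃_mul (θ θ' : ℂ) (A A' B B' : Matrix (Fin 3) (Fin 3) ℂ) :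
    h₃ (θ * θ') (A * A') (B * B') = h₃ θ A B * h₃ θ' A' B' := by
  simp only [h₃, fromBlocks_multiply, smul_mul_smul_comm, mul_inv, Matrix.mul_zero,
    Matrix.zero_mul, add_zero, zero_add]

theorem det_h₃ (hθ : θ ≠ 0) : (h₃ θ A B).det = A.det * B.det := by
  rw [h₃, det_fromBlocks_zero₂₁, det_smul, det_smul, Fintype.card_fin, inv_pow]
  field_simp

theorem h₃_mem_SU3xU3 (hθ : ‖θ‖ = 1) (hA : A ∈ specialUnitaryGroup (Fin 3) ℂ)
    (hB : B ∈ specialUnitaryGroup (Fin 3) ℂ) : h₃ θ A B ∈ SU3xU3 := by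
  rw [mem_specialUnitaryGroup_iff] at hA hB
  have hθinv : ‖θ⁻¹‖ = 1 := by rw [norm_inv, hθ, inv_one]
  have hθA := smul_mem_unitaryGroup_of_norm_eq_one hθ hA.1
  have hθB := smul_mem_unitaryGroup_of_norm_eq_one hθinv hB.1
  refine ⟨mem_specialUnitaryGroup_iff.2 ⟨fromBlocks_mem_unitaryGroup hθA hθB, ?_⟩,
    _, _, hθA, hθB, rfl⟩
  rw [det_h₃ (norm_ne_zero_iff.1 (hθ ▸ one_ne_zero)), hA.2, hB.2, mul_one]

theorem h₃_inv_smul_smul (hθ : θ ≠ 0) (C D : Matrix (Fin 3) (Fin 3) ℂ) :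
    h₃ θ (θ⁻¹ • C) (θ • D) = fromBlocks C 0 0 D := by
  rw [h₃, smul_smul, smul_smul, mul_inv_cancel₀ hθ, inv_mul_cancel₀ hθ, one_smul, one_smul]

theorem exists_h₃_eq_of_mem_SU3xU3 {M : Matrix (Fin 3 ⊕ Fin 3) (Fin 3 ⊕ Fin 3) ℂ}
    (hM : M ∈ SU3xU3) : ∃ (θ : ℂ) (A B : Matrix (Fin 3) (Fin 3) ℂ), ‖θ‖ = 1 ∧
      A ∈ specialUnitaryGroup (Fin 3) ℂ ∧ B ∈ specialUnitaryGroup (Fin 3) ℂ ∧ h₃ θ A B = M := by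
  obtain ⟨hM, C, D, hC, hD, rfl⟩ := hM
  have hCD : C.det * D.det = 1 := by
    rw [← det_fromBlocks_zero₂₁ C 0 D]; exact (mem_specialUnitaryGroup_iff.1 hM).2
  obtain ⟨θ, hθC⟩ := IsAlgClosed.exists_pow_nat_eq C.det three_pos
  have hθ : ‖θ‖ = 1 := by
    have : ‖θ‖ ^ 3 = 1 := by
      rw [← norm_pow, hθC, Complex.mem_unitary_iff_norm_eq_one.1 (det_of_mem_unitary hC)]
    exact (pow_eq_one_iff_of_nonneg (norm_nonneg θ) three_ne_zero).1 this
  have hθ0 : θ ≠ 0 := norm_ne_zero_iff.1 (hθ ▸ one_ne_zero)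
  have hθinv : ‖θ⁻¹‖ = 1 := by rw [norm_inv, hθ, inv_one]
  refine ⟨θ, θ⁻¹ • C, θ • D, hθ, ?_, ?_, h₃_inv_smul_smul hθ0 C D⟩
  · refine mem_specialUnitaryGroup_iff.2 ⟨smul_mem_unitaryGroup_of_norm_eq_one hθinv hC, ?_⟩
    rw [det_smul, Fintype.card_fin, ← hθC, inv_pow, inv_mul_cancel₀ (pow_ne_zero 3 hθ0)]
  · refine mem_specialUnitaryGroup_iff.2 ⟨smul_mem_unitaryGroup_of_norm_eq_one hθ hD, ?_⟩
    rw [det_smul, Fintype.card_fin, hθC]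
    exact hCD

theorem h₃_eq_one_iff (hθ : θ ≠ 0) (hA : A.det = 1) :
    h₃ θ A B = 1 ↔ θ ^ 3 = 1 ∧ A = θ ^ 2 • 1 ∧ B = θ • 1 := by
  have hinv : θ ^ 3 = 1 → θ⁻¹ = θ ^ 2 := fun h ↦ inv_eq_of_mul_eq_one_right (by rwa [← pow_succ'])
  have hblocks : h₃ θ A B = 1 ↔ A = θ⁻¹ • 1 ∧ B = θ • 1 := by
    rw [h₃, ← fromBlocks_one, fromBlocks_inj, ← eq_inv_smul_iff₀ hθ, inv_smul_eq_iff₀ hθ]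
    simp only [true_and]
  rw [hblocks]
  constructor
  · rintro ⟨rfl, rfl⟩
    have hθ3 : θ ^ 3 = 1 := by
      rwa [det_smul, det_one, mul_one, Fintype.card_fin, inv_pow, inv_eq_one] at hA
    exact ⟨hθ3, by rw [hinv hθ3], rfl⟩
  · rintro ⟨hθ3, rfl, rfl⟩
    exact ⟨by rw [hinv hθ3], rfl⟩

end h₃

/-- `h₃ : U(1) × SU(3) × SU(3) → S(U(3) × U(3))` is a surjective group homomorphism with
kernel `{(1,E,E), (ω, ω²E, ωE), (ω², ωE, ω²E)}` for `ω` a primitive cube root of unity. -/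
theorem stmt0 :
    (∀ (θ θ' : ℂ) (A A' B B' : Matrix (Fin 3) (Fin 3) ℂ),
        h₃ (θ * θ') (A * A') (B * B') = h₃ θ A B * h₃ θ' A' B') ∧
    (∀ (θ : ℂ) (A B : Matrix (Fin 3) (Fin 3) ℂ), ‖θ‖ = 1 →
        A ∈ Matrix.specialUnitaryGroup (Fin 3) ℂ →
        B ∈ Matrix.specialUnitaryGroup (Fin 3) ℂ → h₃ θ A B ∈ SU3xU3) ∧
    (∀ M ∈ SU3xU3, ∃ (θ : ℂ) (A B : Matrix (Fin 3) (Fin 3) ℂ), ‖θ‖ = 1 ∧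
        A ∈ Matrix.specialUnitaryGroup (Fin 3) ℂ ∧
        B ∈ Matrix.specialUnitaryGroup (Fin 3) ℂ ∧ h₃ θ A B = M) ∧
    (∀ ω : ℂ, ω ^ 3 = 1 → ω ≠ 1 →
      ∀ (θ : ℂ) (A B : Matrix (Fin 3) (Fin 3) ℂ), ‖θ‖ = 1 →
        A ∈ Matrix.specialUnitaryGroup (Fin 3) ℂ →
        B ∈ Matrix.specialUnitaryGroup (Fin 3) ℂ →
        (h₃ θ A B = 1 ↔
          (θ = 1 ∧ A = 1 ∧ B = 1) ∨
          (θ = ω ∧ A = ω ^ 2 • (1 : Matrix (Fin 3) (Fin 3) ℂ) ∧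
            B = ω • (1 : Matrix (Fin 3) (Fin 3) ℂ)) ∨
          (θ = ω ^ 2 ∧ A = ω • (1 : Matrix (Fin 3) (Fin 3) ℂ) ∧
            B = ω ^ 2 • (1 : Matrix (Fin 3) (Fin 3) ℂ)))) := by
  refine ⟨h₃_mul, fun _ _ _ ↦ h₃_mem_SU3xU3, fun _ ↦ exists_h₃_eq_of_mem_SU3xU3, ?_⟩
  intro ω hω3 hω1 θ A B hθ hA _
  have hω : IsPrimitiveRoot ω 3 :=
    IsPrimitiveRoot.iff_orderOf.2 (orderOf_eq_prime_iff.2 ⟨hω3, hω1⟩)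
  have hω4 : (ω ^ 2) ^ 2 = ω := by
    rw [← pow_mul, show 2 * 2 = 3 + 1 from rfl, pow_succ, hω3, one_mul]
  rw [h₃_eq_one_iff (norm_ne_zero_iff.1 (hθ ▸ one_ne_zero)) (mem_specialUnitaryGroup_iff.1 hA).2]
  constructor
  · rintro ⟨hθ3, rfl, rfl⟩
    rcases hω.pow_three_eq_one_iff.1 hθ3 with rfl | rfl | rfl
    · simp
    · simp
    · simp [hω4]
  · rintro (⟨rfl, rfl, rfl⟩ | ⟨rfl, rfl, rfl⟩ | ⟨rfl, rfl, rfl⟩)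
    · simp
    · exact ⟨hω3, rfl, rfl⟩
    · exact ⟨hω.pow_three_eq_one_iff.2 (.inr (.inr rfl)), by rw [hω4], rfl⟩
end

section
/- The map f₆ : U(1) × SU(2) × SU(6) → S(U(2) × U(6)) given by f₆(a, A, B) = diag(a⁶A, a⁻²B) is a surjective group homomorphism whose kernel is the cyclic group of order 12 consisting of the elements (a, a⁻⁶E₂, a²E₆) with a¹² = 1; hence S(U(2) × U(6)) ≅ (U(1) × SU(2) × SU(6))/Z₁₂. -/
/-!
On each block, `f₆` is a scalar multiple of a special unitary matrix, so its image lies in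
`S(U(2) × U(6))`, and it is multiplicative because scalars commute with everything. Conversely,
given `diag(C, D)` with `det C · det D = 1`, choose `a` with `a¹² = det C`; then
`A = a⁻⁶C` and `B = a²D` have determinant `1` and `f₆(a, A, B) = diag(C, D)`. The kernel is read off
blockwise: `a⁶A = 1` and `a⁻²B = 1`, and `det A = 1` forces `a¹² = 1`.
-/

open Matrix

/-- `f₆(a, A, B) = diag(a⁶A, a⁻²B)` as an `8×8` complex matrix (blocks indexed by
`Fin 2 ⊕ Fin 6`). -/
noncomputable def f₆ (a : ℂ) (A : Matrix (Fin 2) (Fin 2) ℂ) (B : Matrix (Fin 6) (Fin 6) ℂ) :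
    Matrix (Fin 2 ⊕ Fin 6) (Fin 2 ⊕ Fin 6) ℂ :=
  fromBlocks (a ^ 6 • A) 0 0 ((a ^ 2)⁻¹ • B)

/-- `S(U(2) × U(6))`: block-diagonal matrices `diag(C, D)` with `C ∈ U(2)`, `D ∈ U(6)`,
inside `SU(8)`. -/
def SU2xU6 : Set (Matrix (Fin 2 ⊕ Fin 6) (Fin 2 ⊕ Fin 6) ℂ) :=
  {M | M ∈ Matrix.specialUnitaryGroup (Fin 2 ⊕ Fin 6) ℂ ∧
    ∃ (C : Matrix (Fin 2) (Fin 2) ℂ) (D : Matrix (Fin 6) (Fin 6) ℂ),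
      C ∈ Matrix.unitaryGroup (Fin 2) ℂ ∧ D ∈ Matrix.unitaryGroup (Fin 6) ℂ ∧
      M = fromBlocks C 0 0 D}

namespace Matrix

variable {m n α : Type*} [Fintype m] [Fintype n] [DecidableEq m] [DecidableEq n]
  [CommRing α] [StarRing α] {C : Matrix m m α} {D : Matrix n n α}

theorem fromBlocks_zero_zero_mem_unitaryGroup (hC : C ∈ unitaryGroup m α)
    (hD : D ∈ unitaryGroup n α) : fromBlocks C 0 0 D ∈ unitaryGroup (m ⊕ n) α := by
  have hstar : star (fromBlocks C 0 0 D) = fromBlocks (star C) 0 0 (star D) := by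
    simp [star_eq_conjTranspose, fromBlocks_conjTranspose]
  refine ⟨?_, ?_⟩ <;>
    simp [hstar, fromBlocks_multiply, hC.1, hC.2, hD.1, hD.2, fromBlocks_one]

theorem fromBlocks_zero_zero_mem_specialUnitaryGroup (hC : C ∈ unitaryGroup m α)
    (hD : D ∈ unitaryGroup n α) (hdet : C.det * D.det = 1) :
    fromBlocks C 0 0 D ∈ specialUnitaryGroup (m ⊕ n) α :=
  mem_specialUnitaryGroup_iff.mpr
    ⟨fromBlocks_zero_zero_mem_unitaryGroup hC hD, by rwa [det_fromBlocks_zero₁₂]⟩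

end Matrix

namespace Complex

theorem mem_unitary_of_norm_eq_one {z : ℂ} (hz : ‖z‖ = 1) : z ∈ unitary ℂ :=
  Unitary.mem_iff_star_mul_self.mpr (by rw [star_def, conj_mul', hz]; norm_num)

theorem exists_norm_eq_one_pow_eq {z : ℂ} (hz : ‖z‖ = 1) {n : ℕ} (hn : n ≠ 0) :
    ∃ a : ℂ, ‖a‖ = 1 ∧ a ^ n = z := by
  obtain ⟨a, rfl⟩ := IsAlgClosed.exists_pow_nat_eq z (Nat.pos_of_ne_zero hn)
  exact ⟨a, (pow_eq_one_iff_of_nonneg (norm_nonneg a) hn).mp (by rwa [← norm_pow]), rfl⟩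

end Complex

theorem f₆_mul (a a' : ℂ) (A A' : Matrix (Fin 2) (Fin 2) ℂ) (B B' : Matrix (Fin 6) (Fin 6) ℂ) :
    f₆ (a * a') (A * A') (B * B') = f₆ a A B * f₆ a' A' B' := by
  simp only [f₆, fromBlocks_multiply, Matrix.mul_zero, Matrix.zero_mul, add_zero, zero_add,
    smul_mul_smul_comm, mul_pow, mul_inv]

theorem f₆_mem_SU2xU6 {a : ℂ} {A : Matrix (Fin 2) (Fin 2) ℂ} {B : Matrix (Fin 6) (Fin 6) ℂ}
    (ha : ‖a‖ = 1) (hA : A ∈ specialUnitaryGroup (Fin 2) ℂ)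
    (hB : B ∈ specialUnitaryGroup (Fin 6) ℂ) : f₆ a A B ∈ SU2xU6 := by
  rw [mem_specialUnitaryGroup_iff] at hA hB
  have hC : a ^ 6 • A ∈ unitaryGroup (Fin 2) ℂ :=
    Unitary.smul_mem_of_mem (Complex.mem_unitary_of_norm_eq_one (by simp [ha])) hA.1
  have hD : (a ^ 2)⁻¹ • B ∈ unitaryGroup (Fin 6) ℂ :=
    Unitary.smul_mem_of_mem (Complex.mem_unitary_of_norm_eq_one (by simp [ha])) hB.1
  have hdet : (a ^ 6 • A).det * ((a ^ 2)⁻¹ • B).det = 1 := by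
    have ha0 : a ≠ 0 := norm_ne_zero_iff.mp (ha ▸ one_ne_zero)
    simp only [det_smul, Fintype.card_fin, hA.2, hB.2, mul_one, inv_pow, ← pow_mul]
    exact mul_inv_cancel₀ (pow_ne_zero _ ha0)
  exact ⟨fromBlocks_zero_zero_mem_specialUnitaryGroup hC hD hdet, _, _, hC, hD, rfl⟩

theorem exists_f₆_eq {M : Matrix (Fin 2 ⊕ Fin 6) (Fin 2 ⊕ Fin 6) ℂ} (hM : M ∈ SU2xU6) :
    ∃ (a : ℂ) (A : Matrix (Fin 2) (Fin 2) ℂ) (B : Matrix (Fin 6) (Fin 6) ℂ),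
      ‖a‖ = 1 ∧ A ∈ specialUnitaryGroup (Fin 2) ℂ ∧ B ∈ specialUnitaryGroup (Fin 6) ℂ ∧
        f₆ a A B = M := by
  obtain ⟨hSU, C, D, hC, hD, rfl⟩ := hM
  have hdet : C.det * D.det = 1 := by
    rw [← det_fromBlocks_zero₁₂]; exact (mem_specialUnitaryGroup_iff.mp hSU).2
  have hCdet : ‖C.det‖ = 1 := CStarRing.norm_of_mem_unitary (det_of_mem_unitary hC)
  obtain ⟨a, ha, ha12⟩ := Complex.exists_norm_eq_one_pow_eq hCdet (n := 12) (by norm_num)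
  have ha0 : a ≠ 0 := norm_ne_zero_iff.mp (ha ▸ one_ne_zero)
  refine ⟨a, (a ^ 6)⁻¹ • C, a ^ 2 • D, ha, ?_, ?_, ?_⟩
  · refine mem_specialUnitaryGroup_iff.mpr
      ⟨Unitary.smul_mem_of_mem (Complex.mem_unitary_of_norm_eq_one (by simp [ha])) hC, ?_⟩
    rw [det_smul, Fintype.card_fin, inv_pow, ← pow_mul, ha12,
      inv_mul_cancel₀ (norm_ne_zero_iff.mp (hCdet ▸ one_ne_zero))]
  · refine mem_specialUnitaryGroup_iff.mpr
      ⟨Unitary.smul_mem_of_mem (Complex.mem_unitary_of_norm_eq_one (by simp [ha])) hD, ?_⟩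
    rw [det_smul, Fintype.card_fin, ← pow_mul, ha12, hdet]
  · simp only [f₆, smul_inv_smul₀ (pow_ne_zero 6 ha0), inv_smul_smul₀ (pow_ne_zero 2 ha0)]

theorem f₆_eq_one_iff {a : ℂ} {A : Matrix (Fin 2) (Fin 2) ℂ} {B : Matrix (Fin 6) (Fin 6) ℂ}
    (ha : a ≠ 0) (hA : A.det = 1) :
    f₆ a A B = 1 ↔ a ^ 12 = 1 ∧ A = (a ^ 6)⁻¹ • (1 : Matrix (Fin 2) (Fin 2) ℂ) ∧
      B = a ^ 2 • (1 : Matrix (Fin 6) (Fin 6) ℂ) := by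
  have hblocks : f₆ a A B = 1 ↔ A = (a ^ 6)⁻¹ • 1 ∧ B = a ^ 2 • 1 := by
    rw [f₆, ← fromBlocks_one, fromBlocks_inj, eq_inv_smul_iff₀ (pow_ne_zero _ ha),
      inv_smul_eq_iff₀ (pow_ne_zero _ ha)]
    simp
  refine hblocks.trans ⟨fun h => ⟨?_, h⟩, And.right⟩
  rwa [h.1, det_smul, det_one, mul_one, Fintype.card_fin, inv_pow, ← pow_mul, inv_eq_one] at hA

/-- `f₆ : U(1) × SU(2) × SU(6) → S(U(2) × U(6))` is a surjective group homomorphism whose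
kernel is the cyclic group of order 12 consisting of the elements `(a, a⁻⁶E₂, a²E₆)`
with `a¹² = 1`. -/
theorem stmt2 :
    (∀ (a a' : ℂ) (A A' : Matrix (Fin 2) (Fin 2) ℂ) (B B' : Matrix (Fin 6) (Fin 6) ℂ),
        f₆ (a * a') (A * A') (B * B') = f₆ a A B * f₆ a' A' B') ∧
    (∀ (a : ℂ) (A : Matrix (Fin 2) (Fin 2) ℂ) (B : Matrix (Fin 6) (Fin 6) ℂ), ‖a‖ = 1 →
        A ∈ Matrix.specialUnitaryGroup (Fin 2) ℂ →
        B ∈ Matrix.specialUnitaryGroup (Fin 6) ℂ → f₆ a A B ∈ SU2xU6) ∧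
    (∀ M ∈ SU2xU6, ∃ (a : ℂ) (A : Matrix (Fin 2) (Fin 2) ℂ) (B : Matrix (Fin 6) (Fin 6) ℂ),
        ‖a‖ = 1 ∧ A ∈ Matrix.specialUnitaryGroup (Fin 2) ℂ ∧
        B ∈ Matrix.specialUnitaryGroup (Fin 6) ℂ ∧ f₆ a A B = M) ∧
    (∀ (a : ℂ) (A : Matrix (Fin 2) (Fin 2) ℂ) (B : Matrix (Fin 6) (Fin 6) ℂ), ‖a‖ = 1 →
        A ∈ Matrix.specialUnitaryGroup (Fin 2) ℂ →
        B ∈ Matrix.specialUnitaryGroup (Fin 6) ℂ →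
        (f₆ a A B = 1 ↔
          a ^ 12 = 1 ∧ A = (a ^ 6)⁻¹ • (1 : Matrix (Fin 2) (Fin 2) ℂ) ∧
            B = a ^ 2 • (1 : Matrix (Fin 6) (Fin 6) ℂ))) :=
  ⟨f₆_mul, fun _ _ _ ha hA hB => f₆_mem_SU2xU6 ha hA hB, fun _ hM => exists_f₆_eq hM,
    fun _ _ _ ha hA _ => f₆_eq_one_iff (norm_ne_zero_iff.mp (ha ▸ one_ne_zero))
      (mem_specialUnitaryGroup_iff.mp hA).2⟩
end

section
/- The map h₅ : U(1) × SU(5) → S(U(1) × U(5)) given by h₅(θ, A) = diag(θ⁵, θ⁻¹A) is a surjective group homomorphism whose kernel is the cyclic group of order 5 consisting of elements (ν, νE) with ν⁵ = 1; hence S(U(1) × U(5)) ≅ (U(1) × SU(5))/Z₅. -/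
open Matrix

/-- `h₅(θ, A) = diag(θ⁵, θ⁻¹A)` as a `6×6` complex matrix (blocks indexed by `Fin 1 ⊕ Fin 5`). -/
noncomputable def h₅ (θ : ℂ) (A : Matrix (Fin 5) (Fin 5) ℂ) :
    Matrix (Fin 1 ⊕ Fin 5) (Fin 1 ⊕ Fin 5) ℂ :=
  fromBlocks (θ ^ 5 • (1 : Matrix (Fin 1) (Fin 1) ℂ)) 0 0 (θ⁻¹ • A)

/-- `S(U(1) × U(5))`: block-diagonal matrices `diag(ζ, B)` with `ζ ∈ U(1)`, `B ∈ U(5)`,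
inside `SU(6)`. -/
def SU1xU5 : Set (Matrix (Fin 1 ⊕ Fin 5) (Fin 1 ⊕ Fin 5) ℂ) :=
  {M | M ∈ Matrix.specialUnitaryGroup (Fin 1 ⊕ Fin 5) ℂ ∧
    ∃ (C : Matrix (Fin 1) (Fin 1) ℂ) (D : Matrix (Fin 5) (Fin 5) ℂ),
      C ∈ Matrix.unitaryGroup (Fin 1) ℂ ∧ D ∈ Matrix.unitaryGroup (Fin 5) ℂ ∧
      M = fromBlocks C 0 0 D}

/-!
Scaling the two blocks by `θ⁵` and `θ⁻¹` is multiplicative in `θ` and leaves the determinant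
unchanged, since `θ⁵ · θ⁻⁵ = 1`; so `h₅` is a homomorphism into `S(U(1) × U(5))`. Conversely,
`diag(ζ, B)` is hit by `(θ, θB)` for any fifth root `θ` of `ζ`, and `det (θB) = ζ det B = 1`.
Finally `h₅(θ, A) = 1` says exactly `θ⁵ = 1` and `θ⁻¹A = E`.
-/

theorem RCLike.mem_unitary_of_norm_eq_one {𝕜 : Type*} [RCLike 𝕜] {z : 𝕜} (hz : ‖z‖ = 1) :
    z ∈ unitary 𝕜 :=
  Unitary.mem_iff_star_mul_self.mpr <| by
    rw [RCLike.star_def, RCLike.conj_mul, hz]; norm_num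

namespace Matrix

variable {m n : Type*} [Fintype m] [Fintype n] [DecidableEq m] [DecidableEq n]

theorem fromBlocks_zero_mem_unitaryGroup {α : Type*} [CommRing α] [StarRing α]
    {C : Matrix m m α} {D : Matrix n n α} (hC : C ∈ unitaryGroup m α)
    (hD : D ∈ unitaryGroup n α) : fromBlocks C 0 0 D ∈ unitaryGroup (m ⊕ n) α := by
  rw [mem_unitaryGroup_iff, star_eq_conjTranspose, fromBlocks_conjTranspose,
    fromBlocks_multiply, ← star_eq_conjTranspose, ← star_eq_conjTranspose,
    mem_unitaryGroup_iff.mp hC, mem_unitaryGroup_iff.mp hD]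
  simp

theorem smul_mem_unitaryGroup {𝕜 : Type*} [RCLike 𝕜] {z : 𝕜} (hz : ‖z‖ = 1)
    {A : Matrix n n 𝕜} (hA : A ∈ unitaryGroup n 𝕜) : z • A ∈ unitaryGroup n 𝕜 :=
  Unitary.smul_mem_of_mem (RCLike.mem_unitary_of_norm_eq_one hz) hA

theorem eq_det_smul_one [Unique m] {α : Type*} [CommRing α] (C : Matrix m m α) :
    C = C.det • 1 := by
  ext i j
  simp [Subsingleton.elim i default, Subsingleton.elim j default, det_unique]

theorem norm_det_of_mem_unitaryGroup {A : Matrix n n ℂ} (hA : A ∈ unitaryGroup n ℂ) :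
    ‖A.det‖ = 1 :=
  CStarRing.norm_of_mem_unitary (det_of_mem_unitary hA)

end Matrix

theorem h₅_mul (θ θ' : ℂ) (A A' : Matrix (Fin 5) (Fin 5) ℂ) :
    h₅ (θ * θ') (A * A') = h₅ θ A * h₅ θ' A' := by
  simp only [h₅, fromBlocks_multiply, Matrix.mul_zero, Matrix.zero_mul, add_zero, zero_add,
    smul_mul_smul_comm, one_mul, mul_pow, mul_inv]

theorem det_h₅ {θ : ℂ} (hθ : θ ≠ 0) (A : Matrix (Fin 5) (Fin 5) ℂ) : (h₅ θ A).det = A.det := by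
  rw [h₅, det_fromBlocks_zero₂₁, det_smul, det_smul, det_one, Fintype.card_fin,
    Fintype.card_fin, inv_pow, ← mul_assoc, mul_one, pow_one, mul_inv_cancel₀ (pow_ne_zero _ hθ),
    one_mul]

theorem h₅_mem_SU1xU5 {θ : ℂ} (hθ : ‖θ‖ = 1) {A : Matrix (Fin 5) (Fin 5) ℂ}
    (hA : A ∈ specialUnitaryGroup (Fin 5) ℂ) : h₅ θ A ∈ SU1xU5 := by
  have hθ₀ : θ ≠ 0 := ne_zero_of_norm_ne_zero (hθ ▸ one_ne_zero)
  have hC : θ ^ 5 • (1 : Matrix (Fin 1) (Fin 1) ℂ) ∈ unitaryGroup (Fin 1) ℂ :=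
    smul_mem_unitaryGroup (by rw [norm_pow, hθ, one_pow]) (one_mem _)
  have hD : θ⁻¹ • A ∈ unitaryGroup (Fin 5) ℂ :=
    smul_mem_unitaryGroup (by rw [norm_inv, hθ, inv_one]) (mem_specialUnitaryGroup_iff.mp hA).1
  refine ⟨mem_specialUnitaryGroup_iff.mpr ⟨fromBlocks_zero_mem_unitaryGroup hC hD, ?_⟩,
    _, _, hC, hD, rfl⟩
  rw [det_h₅ hθ₀, (mem_specialUnitaryGroup_iff.mp hA).2]

theorem exists_h₅_eq {M : Matrix (Fin 1 ⊕ Fin 5) (Fin 1 ⊕ Fin 5) ℂ} (hM : M ∈ SU1xU5) :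
    ∃ (θ : ℂ) (A : Matrix (Fin 5) (Fin 5) ℂ), ‖θ‖ = 1 ∧
      A ∈ specialUnitaryGroup (Fin 5) ℂ ∧ h₅ θ A = M := by
  obtain ⟨hMdet, C, D, hC, hD, rfl⟩ := hM
  have hCD : C.det * D.det = 1 := by
    rw [← det_fromBlocks_zero₂₁]; exact (mem_specialUnitaryGroup_iff.mp hMdet).2
  obtain ⟨θ, hθ⟩ := IsAlgClosed.exists_pow_nat_eq C.det (by norm_num : 0 < 5)
  have hθ₁ : ‖θ‖ = 1 :=
    (pow_eq_one_iff_of_nonneg (norm_nonneg θ) (by norm_num : 5 ≠ 0)).mp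
      (by rw [← norm_pow, hθ, norm_det_of_mem_unitaryGroup hC])
  have hθ₀ : θ ≠ 0 := ne_zero_of_norm_ne_zero (hθ₁ ▸ one_ne_zero)
  refine ⟨θ, θ • D, hθ₁, mem_specialUnitaryGroup_iff.mpr ⟨smul_mem_unitaryGroup hθ₁ hD, ?_⟩, ?_⟩
  · rw [det_smul, Fintype.card_fin, hθ, hCD]
  · rw [h₅, hθ, ← eq_det_smul_one, inv_smul_smul₀ hθ₀]

theorem h₅_eq_one_iff {θ : ℂ} (hθ : θ ≠ 0) (A : Matrix (Fin 5) (Fin 5) ℂ) :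
    h₅ θ A = 1 ↔ θ ^ 5 = 1 ∧ A = θ • (1 : Matrix (Fin 5) (Fin 5) ℂ) := by
  rw [h₅, ← fromBlocks_one, fromBlocks_inj, inv_smul_eq_iff₀ hθ,
    (smul_left_injective ℂ one_ne_zero).eq_iff' (one_smul ℂ _)]
  simp only [true_and]

/-- `h₅ : U(1) × SU(5) → S(U(1) × U(5))` is a surjective group homomorphism whose kernel is
the cyclic group of order 5 consisting of the elements `(ν, νE)` with `ν⁵ = 1`. -/
theorem stmt3 :
    (∀ (θ θ' : ℂ) (A A' : Matrix (Fin 5) (Fin 5) ℂ),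
        h₅ (θ * θ') (A * A') = h₅ θ A * h₅ θ' A') ∧
    (∀ (θ : ℂ) (A : Matrix (Fin 5) (Fin 5) ℂ), ‖θ‖ = 1 →
        A ∈ Matrix.specialUnitaryGroup (Fin 5) ℂ → h₅ θ A ∈ SU1xU5) ∧
    (∀ M ∈ SU1xU5, ∃ (θ : ℂ) (A : Matrix (Fin 5) (Fin 5) ℂ), ‖θ‖ = 1 ∧
        A ∈ Matrix.specialUnitaryGroup (Fin 5) ℂ ∧ h₅ θ A = M) ∧
    (∀ (θ : ℂ) (A : Matrix (Fin 5) (Fin 5) ℂ), ‖θ‖ = 1 →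
        A ∈ Matrix.specialUnitaryGroup (Fin 5) ℂ →
        (h₅ θ A = 1 ↔ θ ^ 5 = 1 ∧ A = θ • (1 : Matrix (Fin 5) (Fin 5) ℂ))) :=
  ⟨h₅_mul, fun _ _ hθ hA => h₅_mem_SU1xU5 hθ hA, fun _ hM => exists_h₅_eq hM,
    fun _ A hθ _ => h₅_eq_one_iff (ne_zero_of_norm_ne_zero (hθ ▸ one_ne_zero)) A⟩
end

section
/- Let δ₁ be the ℝ-linear map on the octonions determined on the standard basis by δ₁: 1↦1, e₁↦e₁, e₂↦e₄, e₃↦e₅, e₄↦e₂, e₅↦e₃, e₆↦-e₆, e₇↦-e₇. Then δ₁ is an algebra automorphism of the octonions with δ₁² = 1, and δ₁γ = γ_H δ₁, where γ is the automorphism fixing ℍ = span(1,e₁,e₂,e₃) and negating e₄,…,e₇, and γ_H fixes 1,e₁,e₄,e₅ and negates e₂,e₃,e₆,e₇. In particular γ and γ_H are conjugate in the automorphism group G₂ of the octonions. -/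
open scoped Quaternion

/-- The octonions, realized via the Cayley–Dickson construction as pairs of quaternions. -/
abbrev Oct : Type := ℍ[ℝ] × ℍ[ℝ]

/-- The Cayley multiplication on `𝕆 = ℍ ⊕ ℍ`. -/
noncomputable def omul (x y : Oct) : Oct :=
  (x.1 * y.1 - star y.2 * x.2, y.2 * x.1 + x.2 * star y.1)

/-- The standard basis `1, e₁, …, e₇` of the octonions:
`1 = (1,0)`, `e₁ = (i,0)`, `e₂ = (j,0)`, `e₃ = (k,0)`,
`e₄ = (0,1)`, `e₅ = (0,i)`, `e₆ = (0,j)`, `e₇ = (0,k)`. -/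
noncomputable def octE : Fin 8 → Oct
  | 0 => (⟨1, 0, 0, 0⟩, 0)
  | 1 => (⟨0, 1, 0, 0⟩, 0)
  | 2 => (⟨0, 0, 1, 0⟩, 0)
  | 3 => (⟨0, 0, 0, 1⟩, 0)
  | 4 => (0, ⟨1, 0, 0, 0⟩)
  | 5 => (0, ⟨0, 1, 0, 0⟩)
  | 6 => (0, ⟨0, 0, 1, 0⟩)
  | 7 => (0, ⟨0, 0, 0, 1⟩)

/-- `δ₁ : 1↦1, e₁↦e₁, e₂↦e₄, e₃↦e₅, e₄↦e₂, e₅↦e₃, e₆↦-e₆, e₇↦-e₇` (ℝ-linearly extended). -/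
def delta1 (x : Oct) : Oct :=
  (⟨x.1.re, x.1.imI, x.2.re, x.2.imI⟩, ⟨x.1.imJ, x.1.imK, -x.2.imJ, -x.2.imK⟩)

/-- `γ`: the automorphism fixing `ℍ = span(1,e₁,e₂,e₃)` and negating `e₄,…,e₇`. -/
def gammaOct (x : Oct) : Oct := (x.1, -x.2)

/-- `γ_H`: fixes `1, e₁, e₄, e₅` and negates `e₂, e₃, e₆, e₇`. -/
def gammaHOct (x : Oct) : Oct :=
  (⟨x.1.re, x.1.imI, -x.1.imJ, -x.1.imK⟩, ⟨x.2.re, x.2.imI, -x.2.imJ, -x.2.imK⟩)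

/-!
`δ₁` fixes `ℂ = span(1, e₁)` and exchanges `e₂ = j` with `e₄`, the generators of the two
Cayley–Dickson doublings `ℂ ⊂ ℍ ⊂ 𝕆`: writing quaternions as `z + w j` with `z, w ∈ ℂ`, it is
`(z₁ + w₁ j, z₂ + w₂ j) ↦ (z₁ + z₂ j, w₁ - w₂ j)`. This is why it is multiplicative; the check is
eight quadratic polynomial identities in the real coordinates of the factors. Conjugation by `δ₁`
carries the `-1` eigenspace `span(e₄, …, e₇)` of `γ` onto `span(e₂, e₃, e₆, e₇)`, that of `γ_H`.
-/

-- Stated on projections: `simp`'s quaternion lemmas do not fire on the raw constructors in `delta1`.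
section Coordinates

variable (x : Oct)

@[simp] theorem delta1_fst_re : (delta1 x).1.re = x.1.re := rfl
@[simp] theorem delta1_fst_imI : (delta1 x).1.imI = x.1.imI := rfl
@[simp] theorem delta1_fst_imJ : (delta1 x).1.imJ = x.2.re := rfl
@[simp] theorem delta1_fst_imK : (delta1 x).1.imK = x.2.imI := rfl
@[simp] theorem delta1_snd_re : (delta1 x).2.re = x.1.imJ := rfl
@[simp] theorem delta1_snd_imI : (delta1 x).2.imI = x.1.imK := rfl
@[simp] theorem delta1_snd_imJ : (delta1 x).2.imJ = -x.2.imJ := rfl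
@[simp] theorem delta1_snd_imK : (delta1 x).2.imK = -x.2.imK := rfl

end Coordinates

theorem delta1_add (x y : Oct) : delta1 (x + y) = delta1 x + delta1 y := by
  ext <;> simp [add_comm]

theorem delta1_smul (r : ℝ) (x : Oct) : delta1 (r • x) = r • delta1 x := by
  ext <;> simp

theorem delta1_involutive : Function.Involutive delta1 := by
  intro x
  ext <;> simp

theorem delta1_omul (x y : Oct) : delta1 (omul x y) = omul (delta1 x) (delta1 y) := by
  ext <;> simp [omul] <;> ring

theorem delta1_gammaOct (x : Oct) : delta1 (gammaOct x) = gammaHOct (delta1 x) := by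
  ext <;> simp [gammaOct, gammaHOct]

/-- `δ₁` is an involutive algebra automorphism of the octonions with the stated values on the
standard basis, and `δ₁ γ = γ_H δ₁`; in particular `γ` and `γ_H` are conjugate in
`G₂ = Aut(𝕆)`. -/
theorem stmt13 :
    delta1 (octE 0) = octE 0 ∧ delta1 (octE 1) = octE 1 ∧
    delta1 (octE 2) = octE 4 ∧ delta1 (octE 3) = octE 5 ∧
    delta1 (octE 4) = octE 2 ∧ delta1 (octE 5) = octE 3 ∧
    delta1 (octE 6) = -octE 6 ∧ delta1 (octE 7) = -octE 7 ∧
    (∀ x y : Oct, delta1 (omul x y) = omul (delta1 x) (delta1 y)) ∧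
    (∀ x y : Oct, delta1 (x + y) = delta1 x + delta1 y) ∧
    (∀ (r : ℝ) (x : Oct), delta1 (r • x) = r • delta1 x) ∧
    (∀ x : Oct, delta1 (delta1 x) = x) ∧
    (∀ x : Oct, delta1 (gammaOct x) = gammaHOct (delta1 x)) := by
  refine ⟨?_, ?_, ?_, ?_, ?_, ?_, ?_, ?_, delta1_omul, delta1_add, delta1_smul, delta1_involutive,
    delta1_gammaOct⟩
  -- Likewise a sign in front of a raw constructor is stuck, so move it to the `δ₁` side.
  all_goals try rw [← neg_eq_iff_eq_neg]
  all_goals ext <;> simp [octE]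
end
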